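/- Let 0 ≤ ε < 1/2 and let A be an online paging policy such that at every cache miss with most recent request s, A evicts a page drawn from a distribution μ on its current cache satisfying Σ_{p} μ(p)·α(p<q|s) ≤ 1/2 + ε for every page q of the current cache. Then A is 2/(1−2ε)-competitive: for every online paging policy B started from the same initial cache and every horizon T, E[cost(A, T)] ≤ (2/(1−2ε)) · E[cost(B, T)]. -/
import Mathlib


open Finset

/-! ## The Markov paging model

Pages are `Fin n`.  Requests are drawn from a time-homogeneous Markov chain with
row-stochastic transition matrix `M` and a fixed initial distribution `init`.
An online paging policy is given by its (randomized) eviction rule: on a cache miss,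
`pol hist cache p` is the probability of evicting page `p`, where `hist` is the list
of requests seen so far (most recent first, the current — missed — request at the head)
and `cache` is the current cache. -/

/-- A (randomized) online paging policy: given the request history (most recent first,
the current request at the head) and the current cache, the probability of evicting
each page. -/
abbrev Policy (n : ℕ) := List (Fin n) → Finset (Fin n) → Fin n → ℝ

/-- `M` is a row-stochastic transition matrix. -/
def IsStochastic {n : ℕ} (M : Fin n → Fin n → ℝ) : Prop :=
  ∀ i, (∀ j, 0 ≤ M i j) ∧ (∑ j, M i j) = 1

/-- `μ` is a probability distribution on the pages. -/
def IsDist {n : ℕ} (μ : Fin n → ℝ) : Prop :=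
  (∀ i, 0 ≤ μ i) ∧ (∑ i, μ i) = 1

/-- Validity of a policy for cache size `k`: on any (size-`k`) cache, the eviction rule
is a probability distribution supported on the cache. -/
def IsPolicy {n : ℕ} (k : ℕ) (pol : Policy n) : Prop :=
  ∀ (hist : List (Fin n)) (cache : Finset (Fin n)), cache.card = k →
    (∀ p, 0 ≤ pol hist cache p) ∧ (∀ p, p ∉ cache → pol hist cache p = 0) ∧
      (∑ p ∈ cache, pol hist cache p) = 1

/-- Expected number of misses of policy `pol` on the next `T` requests, where the next
request is drawn from `dist`, the history so far is `hist` and the current cache is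
`cache`.  On a hit the cache is unchanged; on a miss the policy pays `1`, evicts a page
`p` with probability `pol (x :: hist) cache p` and brings the requested page in. -/
noncomputable def runAux {n : ℕ} (M : Fin n → Fin n → ℝ) (pol : Policy n) :
    ℕ → (Fin n → ℝ) → List (Fin n) → Finset (Fin n) → ℝ
  | 0, _, _, _ => 0
  | T + 1, dist, hist, cache =>
      ∑ x : Fin n, dist x *
        (if x ∈ cache then runAux M pol T (M x) (x :: hist) cache
         else 1 + ∑ p ∈ cache, pol (x :: hist) cache p *
              runAux M pol T (M x) (x :: hist) (insert x (cache.erase p)))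

/-- `E[cost(pol, T)]`: the expected number of cache misses of policy `pol` during the
first `T` requests of the Markov chain `(M, init)`, starting from cache `cache`. -/
noncomputable def expCost {n : ℕ} (M : Fin n → Fin n → ℝ) (init : Fin n → ℝ)
    (pol : Policy n) (cache : Finset (Fin n)) (T : ℕ) : ℝ :=
  runAux M pol T init [] cache

/-- Probability that, within the next `T` steps of the chain currently at `s`, page `p`
is requested strictly before page `q` (a request to `q` — in particular `p = q` — stops
the process with failure). -/
noncomputable def alphaAux {n : ℕ} (M : Fin n → Fin n → ℝ) (p q : Fin n) :
    ℕ → Fin n → ℝ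
  | 0, _ => 0
  | T + 1, s =>
      ∑ x : Fin n, M s x *
        (if x = q then 0 else if x = p then 1 else alphaAux M p q T x)

/-- `α(p<q|s)`: the probability that, for the chain started at `s`, the first subsequent
request to `p` occurs strictly before the first subsequent request to `q`; in particular
`α(p<p|s) = 0`. -/
noncomputable def alphaProb {n : ℕ} (M : Fin n → Fin n → ℝ) (p q s : Fin n) : ℝ :=
  ⨆ T : ℕ, alphaAux M p q T s

/-- An approximately dominating policy (additive error `ε`): a valid policy which, at
every cache miss with most recent request `s`, evicts a page drawn from a distribution
`μ` on its current cache satisfying `∑ p, μ p · α(p<q|s) ≤ 1/2 + ε` for every page `q`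
of the cache. -/
def IsAddApproxDomPolicy {n : ℕ} (k : ℕ) (M : Fin n → Fin n → ℝ) (pol : Policy n)
    (ε : ℝ) : Prop :=
  IsPolicy k pol ∧
    ∀ (s : Fin n) (hist : List (Fin n)) (cache : Finset (Fin n)),
      cache.card = k → s ∉ cache →
        ∀ q ∈ cache,
          (∑ p ∈ cache, pol (s :: hist) cache p * alphaProb M p q s) ≤ 1 / 2 + ε

section Alpha
variable {n : ℕ} {M : Fin n → Fin n → ℝ} (hM : IsStochastic M)
include hM

lemma alphaAux_nonneg (p q : Fin n) : ∀ T s, 0 ≤ alphaAux M p q T s := by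
  intro T
  induction T with
  | zero => intro s; simp [alphaAux]
  | succ T ih =>
    intro s
    rw [alphaAux]
    refine Finset.sum_nonneg fun x _ => mul_nonneg ((hM s).1 x) ?_
    split_ifs with h1 h2
    · exact le_refl 0
    · exact zero_le_one
    · exact ih x

lemma alphaAux_le_one (p q : Fin n) : ∀ T s, alphaAux M p q T s ≤ 1 := by
  intro T
  induction T with
  | zero => intro s; simp [alphaAux]
  | succ T ih =>
    intro s
    rw [alphaAux]
    calc (∑ x : Fin n, M s x *
        (if x = q then 0 else if x = p then 1 else alphaAux M p q T x))
        ≤ ∑ x : Fin n, M s x * 1 := by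
          refine Finset.sum_le_sum fun x _ => mul_le_mul_of_nonneg_left ?_ ((hM s).1 x)
          split_ifs with h1 h2
          · exact zero_le_one
          · exact le_refl 1
          · exact ih x
      _ = 1 := by simp [(hM s).2]

lemma alphaAux_mono (p q : Fin n) : ∀ T s, alphaAux M p q T s ≤ alphaAux M p q (T+1) s := by
  intro T
  induction T with
  | zero =>
    intro s
    simpa [alphaAux] using alphaAux_nonneg hM p q 1 s
  | succ T ih =>
    intro s
    rw [alphaAux, alphaAux]
    refine Finset.sum_le_sum fun x _ => mul_le_mul_of_nonneg_left ?_ ((hM s).1 x)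
    split_ifs
    · exact le_refl _
    · exact le_refl _
    · exact ih x

lemma alphaAux_monotone (p q s : Fin n) : Monotone (fun T => alphaAux M p q T s) :=
  monotone_nat_of_le_succ fun T => alphaAux_mono hM p q T s

lemma alphaAux_bddAbove (p q s : Fin n) :
    BddAbove (Set.range fun T => alphaAux M p q T s) := by
  refine ⟨1, ?_⟩
  rintro y ⟨T, rfl⟩
  exact alphaAux_le_one hM p q T s

lemma alphaProb_nonneg (p q s : Fin n) : 0 ≤ alphaProb M p q s := by
  have := le_ciSup (alphaAux_bddAbove hM p q s) 0
  simpa [alphaProb, alphaAux] using this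

lemma alphaProb_le_one (p q s : Fin n) : alphaProb M p q s ≤ 1 :=
  ciSup_le fun T => alphaAux_le_one hM p q T s

lemma alphaProb_tendsto (p q s : Fin n) :
    Filter.Tendsto (fun T => alphaAux M p q T s) Filter.atTop (nhds (alphaProb M p q s)) :=
  tendsto_atTop_ciSup (alphaAux_monotone hM p q s) (alphaAux_bddAbove hM p q s)

lemma alphaProb_rec (p q s : Fin n) :
    alphaProb M p q s
      = ∑ x : Fin n, M s x * (if x = q then 0 else if x = p then 1 else alphaProb M p q x) := by
  have h2 : Filter.Tendsto (fun T => alphaAux M p q (T+1) s) Filter.atTop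
      (nhds (alphaProb M p q s)) :=
    (alphaProb_tendsto hM p q s).comp (Filter.tendsto_add_atTop_nat 1)
  have h3 : Filter.Tendsto (fun T => alphaAux M p q (T+1) s) Filter.atTop
      (nhds (∑ x : Fin n, M s x *
        (if x = q then 0 else if x = p then 1 else alphaProb M p q x))) := by
    have heq : ∀ T, alphaAux M p q (T+1) s
        = ∑ x : Fin n, M s x *
            (if x = q then 0 else if x = p then 1 else alphaAux M p q T x) := fun T => by
      rw [alphaAux]
    simp only [heq]
    refine tendsto_finset_sum _ fun x _ => Filter.Tendsto.const_mul _ ?_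
    split_ifs
    · exact tendsto_const_nhds
    · exact tendsto_const_nhds
    · exact alphaProb_tendsto hM p q x
  exact tendsto_nhds_unique h2 h3

lemma alphaProb_self (p s : Fin n) : alphaProb M p p s = 0 := by
  have hz : ∀ T s', alphaAux M p p T s' = 0 := by
    intro T
    induction T with
    | zero => intro s'; simp [alphaAux]
    | succ T ih =>
      intro s'
      rw [alphaAux]
      refine Finset.sum_eq_zero fun x _ => ?_
      split_ifs with h1
      · ring
      · rw [ih x]; ring
  simp [alphaProb, hz]

lemma alphaAux_triangle (a b c : Fin n) :
    ∀ T s, alphaAux M a c T s ≤ alphaAux M a b T s + alphaAux M b c T s := by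
  intro T
  induction T with
  | zero => intro s; simp [alphaAux]
  | succ T ih =>
    intro s
    rw [alphaAux, alphaAux, alphaAux, ← Finset.sum_add_distrib]
    refine Finset.sum_le_sum fun x _ => ?_
    rw [← mul_add]
    refine mul_le_mul_of_nonneg_left ?_ ((hM s).1 x)
    split_ifs
    all_goals
      linarith [alphaAux_nonneg hM a b T x, alphaAux_nonneg hM b c T x,
        alphaAux_le_one hM a c T x, ih x]

lemma alphaProb_triangle (a b c : Fin n) (s : Fin n) :
    alphaProb M a c s ≤ alphaProb M a b s + alphaProb M b c s := by
  refine ciSup_le fun T => ?_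
  calc alphaAux M a c T s ≤ alphaAux M a b T s + alphaAux M b c T s :=
        alphaAux_triangle hM a b c T s
    _ ≤ alphaProb M a b s + alphaProb M b c s :=
        add_le_add (le_ciSup (alphaAux_bddAbove hM a b s) T)
          (le_ciSup (alphaAux_bddAbove hM b c s) T)
end Alpha

noncomputable def rfun {n : ℕ} (M : Fin n → Fin n → ℝ) (q y x : Fin n) : ℝ :=
  if x = y then 0 else if x = q then 1 else alphaProb M q y x

lemma rfun_nonneg {n : ℕ} {M : Fin n → Fin n → ℝ} (hM : IsStochastic M) (q y x : Fin n) :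
    0 ≤ rfun M q y x := by
  rw [rfun]
  split_ifs
  · exact le_refl 0
  · exact zero_le_one
  · exact alphaProb_nonneg hM q y x

lemma sum_mul_rfun {n : ℕ} {M : Fin n → Fin n → ℝ} (hM : IsStochastic M) (q y s : Fin n) :
    (∑ x : Fin n, M s x * rfun M q y x) = alphaProb M q y s := by
  simp only [rfun]
  exact (alphaProb_rec hM q y s).symm

section FinsetHelpers
variable {α : Type*} [DecidableEq α]

lemma sdiff_ins_erase_mem {S T : Finset α} {x p : α} (hp : p ∈ T) (hpx : p ≠ x) :
    T \ (insert x (S.erase p)) = insert p ((T \ S).erase x) := by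
  ext z
  simp only [mem_sdiff, mem_insert, mem_erase, not_or, not_and, ne_eq]
  constructor
  · rintro ⟨hzT, hzx, hz⟩
    by_cases hzp : z = p
    · exact Or.inl hzp
    · exact Or.inr ⟨hzx, hzT, hz hzp⟩
  · rintro (rfl | ⟨hzx, hzT, hzS⟩)
    · exact ⟨hp, hpx, fun h => absurd rfl h⟩
    · exact ⟨hzT, hzx, fun _ => hzS⟩

lemma sdiff_ins_erase_notMem {S T : Finset α} {x p : α} (hp : p ∉ T) :
    T \ (insert x (S.erase p)) = (T \ S).erase x := by
  ext z
  simp only [mem_sdiff, mem_insert, mem_erase, not_or, not_and, ne_eq]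
  constructor
  · rintro ⟨hzT, hzx, hz⟩
    refine ⟨hzx, hzT, hz ?_⟩
    rintro rfl; exact hp hzT
  · rintro ⟨hzx, hzT, hzS⟩
    exact ⟨hzT, hzx, fun _ => hzS⟩

lemma ins_erase_sdiff {S T : Finset α} {x p : α} (hx : x ∈ T) :
    (insert x (S.erase p)) \ T = (S \ T).erase p := by
  ext z
  simp only [mem_sdiff, mem_insert, mem_erase, ne_eq]
  constructor
  · rintro ⟨rfl | ⟨hzp, hzS⟩, hzT⟩
    · exact absurd hx hzT
    · exact ⟨hzp, hzS, hzT⟩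
  · rintro ⟨hzp, hzS, hzT⟩
    exact ⟨Or.inr ⟨hzp, hzS⟩, hzT⟩

lemma card_exchange {S : Finset α} {x p : α} (hx : x ∉ S) (hp : p ∈ S) :
    (insert x (S.erase p)).card = S.card := by
  rw [Finset.card_insert_of_notMem (fun h => hx (Finset.mem_of_mem_erase h)),
    Finset.card_erase_add_one hp]

lemma matching_surj {S T : Finset α} (hcard : S.card = T.card) (m : α → α)
    (hmY : ∀ q ∈ T \ S, m q ∈ S \ T) (hmI : Set.InjOn m ↑(T \ S)) :
    ∀ y ∈ S \ T, ∃ q ∈ T \ S, m q = y := by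
  have himg : (T \ S).image m = S \ T := by
    apply Finset.eq_of_subset_of_card_le
    · intro y hy
      obtain ⟨q, hq, rfl⟩ := Finset.mem_image.1 hy
      exact hmY q hq
    · rw [Finset.card_image_of_injOn hmI, Finset.card_sdiff_comm hcard.symm]
  intro y hy
  rw [← himg] at hy
  obtain ⟨q, hq, hqy⟩ := Finset.mem_image.1 hy
  exact ⟨q, hq, hqy⟩

lemma ins_erase_sdiff_nm {S T : Finset α} {x p : α} (hx : x ∉ T) :
    (insert x (S.erase p)) \ T = insert x ((S \ T).erase p) := by
  ext z
  simp only [mem_sdiff, mem_insert, mem_erase, ne_eq]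
  constructor
  · rintro ⟨rfl | ⟨hzp, hzS⟩, hzT⟩
    · exact Or.inl rfl
    · exact Or.inr ⟨hzp, hzS, hzT⟩
  · rintro (rfl | ⟨hzp, hzS, hzT⟩)
    · exact ⟨Or.inl rfl, hx⟩
    · exact ⟨Or.inr ⟨hzp, hzS⟩, hzT⟩

end FinsetHelpers

section Step
variable {n : ℕ} {M : Fin n → Fin n → ℝ}

lemma stepA (hM : IsStochastic M)
    {SA SB : Finset (Fin n)} {x : Fin n} (hxB : x ∈ SB) (hxA : x ∉ SA)
    (hcard : SA.card = SB.card)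
    (m : Fin n → Fin n) (hmY : ∀ q ∈ SB \ SA, m q ∈ SA \ SB)
    (hmI : Set.InjOn m ↑(SB \ SA)) {p : Fin n} (hp : p ∈ SA) :
    ∃ m' : Fin n → Fin n,
      (∀ q ∈ SB \ (insert x (SA.erase p)), m' q ∈ (insert x (SA.erase p)) \ SB) ∧
      Set.InjOn m' ↑(SB \ (insert x (SA.erase p))) ∧
      (∑ q ∈ SB \ (insert x (SA.erase p)), alphaProb M q (m' q) x)
        ≤ (∑ q ∈ (SB \ SA).erase x, alphaProb M q (m q) x) + alphaProb M p (m x) x := by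
  have hxD : x ∈ SB \ SA := Finset.mem_sdiff.2 ⟨hxB, hxA⟩
  have hmx : m x ∈ SA \ SB := hmY x hxD
  have hpx : p ≠ x := fun h => hxA (h ▸ hp)
  by_cases hpB : p ∈ SB
  · -- A evicts a page also in B's cache: it joins the difference set, matched to `m x`.
    have hD' : SB \ (insert x (SA.erase p)) = insert p ((SB \ SA).erase x) :=
      sdiff_ins_erase_mem hpB hpx
    have hpD : p ∉ (SB \ SA).erase x := fun h =>
      (Finset.mem_sdiff.1 (Finset.mem_of_mem_erase h)).2 hp
    refine ⟨fun q => if q = p then m x else m q, ?_, ?_, ?_⟩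
    · intro q hq
      rw [hD'] at hq
      dsimp only
      rcases Finset.mem_insert.1 hq with rfl | hq
      · rw [if_pos rfl]
        refine Finset.mem_sdiff.2 ⟨?_, (Finset.mem_sdiff.1 hmx).2⟩
        exact Finset.mem_insert_of_mem (Finset.mem_erase.2
          ⟨fun h => (Finset.mem_sdiff.1 hmx).2 (h ▸ hpB), (Finset.mem_sdiff.1 hmx).1⟩)
      · have hq' := Finset.mem_of_mem_erase hq
        have hqp : q ≠ p := fun h => (Finset.mem_sdiff.1 hq').2 (h ▸ hp)
        rw [if_neg hqp]
        have hmq := hmY q hq'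
        refine Finset.mem_sdiff.2 ⟨?_, (Finset.mem_sdiff.1 hmq).2⟩
        exact Finset.mem_insert_of_mem (Finset.mem_erase.2
          ⟨fun h => (Finset.mem_sdiff.1 hmq).2 (h ▸ hpB), (Finset.mem_sdiff.1 hmq).1⟩)
    · intro q1 hq1 q2 hq2 heq
      have hq1' := Finset.mem_coe.1 hq1
      have hq2' := Finset.mem_coe.1 hq2
      rw [hD'] at hq1' hq2'
      dsimp only at heq
      rcases Finset.mem_insert.1 hq1' with rfl | hq1'' <;>
        rcases Finset.mem_insert.1 hq2' with rfl | hq2''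
      · rfl
      · rw [if_pos rfl] at heq
        have hm2 := Finset.mem_of_mem_erase hq2''
        have h2 : q2 ≠ q1 := fun h => (Finset.mem_sdiff.1 hm2).2 (h ▸ hp)
        rw [if_neg h2] at heq
        exact ((Finset.mem_erase.1 hq2'').1
          (hmI (Finset.mem_coe.2 hm2) (Finset.mem_coe.2 hxD) heq.symm)).elim
      · rw [if_pos rfl] at heq
        have hm1 := Finset.mem_of_mem_erase hq1''
        have h1 : q1 ≠ q2 := fun h => (Finset.mem_sdiff.1 hm1).2 (h ▸ hp)
        rw [if_neg h1] at heq
        exact ((Finset.mem_erase.1 hq1'').1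
          (hmI (Finset.mem_coe.2 hm1) (Finset.mem_coe.2 hxD) heq)).elim
      · have hm1 := Finset.mem_of_mem_erase hq1''
        have hm2 := Finset.mem_of_mem_erase hq2''
        have h1 : q1 ≠ p := fun h => (Finset.mem_sdiff.1 hm1).2 (h ▸ hp)
        have h2 : q2 ≠ p := fun h => (Finset.mem_sdiff.1 hm2).2 (h ▸ hp)
        rw [if_neg h1, if_neg h2] at heq
        exact hmI (Finset.mem_coe.2 hm1) (Finset.mem_coe.2 hm2) heq
    · rw [hD', Finset.sum_insert hpD]
      dsimp only
      rw [if_pos rfl]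
      have hcongr : ∀ q ∈ (SB \ SA).erase x,
          alphaProb M q (if q = p then m x else m q) x = alphaProb M q (m q) x := by
        intro q hq
        have : q ≠ p := fun h =>
          (Finset.mem_sdiff.1 (Finset.mem_of_mem_erase hq)).2 (h ▸ hp)
        rw [if_neg this]
      rw [Finset.sum_congr rfl hcongr]
      linarith
  · -- A evicts a page not in B's cache.
    have hD' : SB \ (insert x (SA.erase p)) = (SB \ SA).erase x :=
      sdiff_ins_erase_notMem hpB
    by_cases hpmx : p = m x
    · -- A evicts the partner of `x`: the pair disappears.
      refine ⟨m, ?_, ?_, ?_⟩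
      · intro q hq
        rw [hD'] at hq
        have hq' := Finset.mem_of_mem_erase hq
        have hmq := hmY q hq'
        refine Finset.mem_sdiff.2 ⟨?_, (Finset.mem_sdiff.1 hmq).2⟩
        refine Finset.mem_insert_of_mem (Finset.mem_erase.2 ⟨?_, (Finset.mem_sdiff.1 hmq).1⟩)
        intro h
        exact (Finset.mem_erase.1 hq).1
          (hmI (Finset.mem_coe.2 hq') (Finset.mem_coe.2 hxD) (h.trans hpmx))
      · rw [hD']
        exact hmI.mono (Finset.coe_subset.2 (Finset.erase_subset _ _))
      · rw [hD']
        have := alphaProb_nonneg hM p (m x) x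
        linarith
    · -- A evicts some other page of `SA \ SB`: rematch its partner to `m x`.
      obtain ⟨q0, hq0, hq0p⟩ :=
        matching_surj hcard m hmY hmI p (Finset.mem_sdiff.2 ⟨hp, hpB⟩)
      have hq0x : q0 ≠ x := by
        intro h
        apply hpmx
        rw [← hq0p, h]
      refine ⟨fun q => if q = q0 then m x else m q, ?_, ?_, ?_⟩
      · intro q hq
        rw [hD'] at hq
        have hq' := Finset.mem_of_mem_erase hq
        dsimp only
        by_cases hqq0 : q = q0
        · rw [if_pos hqq0]
          refine Finset.mem_sdiff.2 ⟨?_, (Finset.mem_sdiff.1 hmx).2⟩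
          exact Finset.mem_insert_of_mem (Finset.mem_erase.2
            ⟨fun h => hpmx h.symm, (Finset.mem_sdiff.1 hmx).1⟩)
        · rw [if_neg hqq0]
          have hmq := hmY q hq'
          refine Finset.mem_sdiff.2 ⟨?_, (Finset.mem_sdiff.1 hmq).2⟩
          refine Finset.mem_insert_of_mem (Finset.mem_erase.2 ⟨?_, (Finset.mem_sdiff.1 hmq).1⟩)
          intro h
          exact hqq0 (hmI (Finset.mem_coe.2 hq') (Finset.mem_coe.2 hq0) (h.trans hq0p.symm))
      · intro q1 hq1 q2 hq2 heq
        have hq1' := Finset.mem_coe.1 hq1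
        have hq2' := Finset.mem_coe.1 hq2
        rw [hD'] at hq1' hq2'
        have hm1 := Finset.mem_of_mem_erase hq1'
        have hm2 := Finset.mem_of_mem_erase hq2'
        dsimp only at heq
        by_cases h1 : q1 = q0 <;> by_cases h2 : q2 = q0
        · exact h1.trans h2.symm
        · rw [if_pos h1, if_neg h2] at heq
          exact ((Finset.mem_erase.1 hq2').1
            (hmI (Finset.mem_coe.2 hm2) (Finset.mem_coe.2 hxD) heq.symm)).elim
        · rw [if_neg h1, if_pos h2] at heq
          exact ((Finset.mem_erase.1 hq1').1
            (hmI (Finset.mem_coe.2 hm1) (Finset.mem_coe.2 hxD) heq)).elim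
        · rw [if_neg h1, if_neg h2] at heq
          exact hmI (Finset.mem_coe.2 hm1) (Finset.mem_coe.2 hm2) heq
      · rw [hD']
        have hq0mem : q0 ∈ (SB \ SA).erase x := Finset.mem_erase.2 ⟨hq0x, hq0⟩
        rw [← Finset.add_sum_erase _ (fun q => alphaProb M q (if q = q0 then m x else m q) x)
            hq0mem,
          ← Finset.add_sum_erase _ (fun q => alphaProb M q (m q) x) hq0mem]
        simp only [if_pos rfl, hq0p, if_true, eq_self_iff_true]
        have hcongr : ∀ q ∈ ((SB \ SA).erase x).erase q0,
            alphaProb M q (if q = q0 then m x else m q) x = alphaProb M q (m q) x := by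
          intro q hq
          rw [if_neg (Finset.mem_erase.1 hq).1]
        rw [Finset.sum_congr rfl hcongr]
        have htri := alphaProb_triangle hM q0 p (m x) x
        linarith
lemma stepC (hM : IsStochastic M)
    {SA SB : Finset (Fin n)} {x : Fin n} (hxA : x ∈ SA) (hxB : x ∉ SB)
    (hcard : SA.card = SB.card)
    (m : Fin n → Fin n) (hmY : ∀ q ∈ SB \ SA, m q ∈ SA \ SB)
    (hmI : Set.InjOn m ↑(SB \ SA)) :
    ∃ q0 ∈ SB \ SA, m q0 = x ∧ ∀ p' ∈ SB, ∃ m' : Fin n → Fin n,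
      (∀ q ∈ (insert x (SB.erase p')) \ SA, m' q ∈ SA \ (insert x (SB.erase p'))) ∧
      Set.InjOn m' ↑((insert x (SB.erase p')) \ SA) ∧
      (∑ q ∈ (insert x (SB.erase p')) \ SA, alphaProb M q (m' q) x)
        ≤ 1 + ∑ q ∈ (SB \ SA).erase q0, alphaProb M q (m q) x := by
  obtain ⟨q0, hq0, hq0x⟩ :=
    matching_surj hcard m hmY hmI x (Finset.mem_sdiff.2 ⟨hxA, hxB⟩)
  refine ⟨q0, hq0, hq0x, ?_⟩
  intro p' hp'
  have hD' : (insert x (SB.erase p')) \ SA = (SB \ SA).erase p' := ins_erase_sdiff hxA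
  set w : Fin n := if p' ∈ SA then p' else m p' with hw
  have hwmem : q0 ≠ p' → (w ∈ SA ∧ w ≠ x ∧ w ∉ SB.erase p') := by
    intro hq0p'
    by_cases hp'A : p' ∈ SA
    · rw [hw, if_pos hp'A]
      exact ⟨hp'A, fun h => hxB (h ▸ hp'), fun h => (Finset.mem_erase.1 h).1 rfl⟩
    · rw [hw, if_neg hp'A]
      have hp'D : p' ∈ SB \ SA := Finset.mem_sdiff.2 ⟨hp', hp'A⟩
      have hmp' := hmY p' hp'D
      refine ⟨(Finset.mem_sdiff.1 hmp').1, ?_,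
        fun h => (Finset.mem_sdiff.1 hmp').2 (Finset.mem_of_mem_erase h)⟩
      intro h
      exact hq0p' (hmI (Finset.mem_coe.2 hq0) (Finset.mem_coe.2 hp'D) (hq0x.trans h.symm))
  refine ⟨fun q => if q = q0 then w else m q, ?_, ?_, ?_⟩
  · intro q hq
    rw [hD'] at hq
    have hq' := Finset.mem_of_mem_erase hq
    dsimp only
    by_cases hqq0 : q = q0
    · rw [if_pos hqq0]
      obtain ⟨h1, h2, h3⟩ := hwmem (hqq0 ▸ (Finset.mem_erase.1 hq).1)
      exact Finset.mem_sdiff.2 ⟨h1, fun h => by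
        rcases Finset.mem_insert.1 h with h | h
        · exact h2 h
        · exact h3 h⟩
    · rw [if_neg hqq0]
      have hmq := hmY q hq'
      refine Finset.mem_sdiff.2 ⟨(Finset.mem_sdiff.1 hmq).1, ?_⟩
      intro h
      rcases Finset.mem_insert.1 h with h | h
      · exact hqq0 (hmI (Finset.mem_coe.2 hq') (Finset.mem_coe.2 hq0) (h.trans hq0x.symm))
      · exact (Finset.mem_sdiff.1 hmq).2 (Finset.mem_of_mem_erase h)
  · intro q1 hq1 q2 hq2 heq
    have hq1' := Finset.mem_coe.1 hq1
    have hq2' := Finset.mem_coe.1 hq2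
    rw [hD'] at hq1' hq2'
    have hm1 := Finset.mem_of_mem_erase hq1'
    have hm2 := Finset.mem_of_mem_erase hq2'
    dsimp only at heq
    by_cases h1 : q1 = q0 <;> by_cases h2 : q2 = q0
    · exact h1.trans h2.symm
    · rw [if_pos h1, if_neg h2] at heq
      obtain ⟨hw1, hw2, hw3⟩ := hwmem (h1 ▸ (Finset.mem_erase.1 hq1').1)
      by_cases hp'A : p' ∈ SA
      · rw [hw, if_pos hp'A] at heq
        exact ((Finset.mem_sdiff.1 (hmY q2 hm2)).2 (heq ▸ hp')).elim
      · rw [hw, if_neg hp'A] at heq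
        have hp'D : p' ∈ SB \ SA := Finset.mem_sdiff.2 ⟨hp', hp'A⟩
        have := hmI (Finset.mem_coe.2 hp'D) (Finset.mem_coe.2 hm2) heq
        exact ((Finset.mem_erase.1 hq2').1 (this ▸ rfl : q2 = p')).elim
    · rw [if_neg h1, if_pos h2] at heq
      obtain ⟨hw1, hw2, hw3⟩ := hwmem (h2 ▸ (Finset.mem_erase.1 hq2').1)
      by_cases hp'A : p' ∈ SA
      · rw [hw, if_pos hp'A] at heq
        exact ((Finset.mem_sdiff.1 (hmY q1 hm1)).2 (heq ▸ hp')).elim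
      · rw [hw, if_neg hp'A] at heq
        have hp'D : p' ∈ SB \ SA := Finset.mem_sdiff.2 ⟨hp', hp'A⟩
        have := hmI (Finset.mem_coe.2 hm1) (Finset.mem_coe.2 hp'D) heq
        exact ((Finset.mem_erase.1 hq1').1 this).elim
    · rw [if_neg h1, if_neg h2] at heq
      exact hmI (Finset.mem_coe.2 hm1) (Finset.mem_coe.2 hm2) heq
  · rw [hD']
    by_cases hq0p' : q0 = p'
    · have hcongr : ∀ q ∈ (SB \ SA).erase p',
          alphaProb M q (if q = q0 then w else m q) x = alphaProb M q (m q) x := by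
        intro q hq
        rw [if_neg (fun h => (Finset.mem_erase.1 hq).1 (h.trans hq0p'))]
      rw [Finset.sum_congr rfl hcongr, ← hq0p']
      have : (0:ℝ) ≤ 1 := zero_le_one
      linarith
    · have hq0mem : q0 ∈ (SB \ SA).erase p' := Finset.mem_erase.2 ⟨hq0p', hq0⟩
      rw [← Finset.add_sum_erase _ (fun q => alphaProb M q (if q = q0 then w else m q) x)
          hq0mem]
      simp only [if_pos rfl, if_true, eq_self_iff_true]
      have hcongr : ∀ q ∈ ((SB \ SA).erase p').erase q0,
          alphaProb M q (if q = q0 then w else m q) x = alphaProb M q (m q) x := by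
        intro q hq
        rw [if_neg (Finset.mem_erase.1 hq).1]
      rw [Finset.sum_congr rfl hcongr]
      have hle : (∑ q ∈ ((SB \ SA).erase p').erase q0, alphaProb M q (m q) x)
          ≤ ∑ q ∈ (SB \ SA).erase q0, alphaProb M q (m q) x := by
        refine Finset.sum_le_sum_of_subset_of_nonneg ?_
          (fun q _ _ => alphaProb_nonneg hM q (m q) x)
        intro z hz
        exact Finset.mem_erase.2 ⟨(Finset.mem_erase.1 hz).1,
          Finset.mem_of_mem_erase (Finset.mem_of_mem_erase hz)⟩
      have h1 := alphaProb_le_one hM q0 w x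
      linarith

lemma stepB' (hM : IsStochastic M)
    {SA SB : Finset (Fin n)} {x : Fin n} (hxA : x ∉ SA) (hxB : x ∉ SB)
    (hcard : SA.card = SB.card)
    (m : Fin n → Fin n) (hmY : ∀ q ∈ SB \ SA, m q ∈ SA \ SB)
    (hmI : Set.InjOn m ↑(SB \ SA)) {p' : Fin n} (hp' : p' ∈ SB) :
    ∃ m1 : Fin n → Fin n, m1 x ∈ SA ∧
      (∀ q ∈ (insert x (SB.erase p')) \ SA, m1 q ∈ SA \ (insert x (SB.erase p'))) ∧
      Set.InjOn m1 ↑((insert x (SB.erase p')) \ SA) ∧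
      (∀ q ∈ (SB \ SA).erase p', m1 q = m q) ∧
      (insert x (SB.erase p')) \ SA = insert x ((SB \ SA).erase p') := by
  have hD1 : (insert x (SB.erase p')) \ SA = insert x ((SB \ SA).erase p') :=
    ins_erase_sdiff_nm hxA
  set z : Fin n := if p' ∈ SA then p' else m p' with hz
  have hzSA : z ∈ SA := by
    by_cases hp'A : p' ∈ SA
    · rw [hz, if_pos hp'A]; exact hp'A
    · rw [hz, if_neg hp'A]
      exact (Finset.mem_sdiff.1 (hmY p' (Finset.mem_sdiff.2 ⟨hp', hp'A⟩))).1
  have hznB' : z ∉ insert x (SB.erase p') := by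
    intro h
    rcases Finset.mem_insert.1 h with h | h
    · exact hxA (h ▸ hzSA)
    · by_cases hp'A : p' ∈ SA
      · rw [hz, if_pos hp'A] at h
        exact (Finset.mem_erase.1 h).1 rfl
      · rw [hz, if_neg hp'A] at h
        exact (Finset.mem_sdiff.1 (hmY p' (Finset.mem_sdiff.2 ⟨hp', hp'A⟩))).2
          (Finset.mem_of_mem_erase h)
  refine ⟨fun q => if q = x then z else m q, by dsimp only; rw [if_pos rfl]; exact hzSA, ?_, ?_, ?_, hD1⟩
  · intro q hq
    rw [hD1] at hq
    dsimp only
    rcases Finset.mem_insert.1 hq with rfl | hq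
    · rw [if_pos rfl]
      exact Finset.mem_sdiff.2 ⟨hzSA, hznB'⟩
    · have hq' := Finset.mem_of_mem_erase hq
      have hqx : q ≠ x := fun h => hxB (h ▸ (Finset.mem_sdiff.1 hq').1)
      rw [if_neg hqx]
      have hmq := hmY q hq'
      refine Finset.mem_sdiff.2 ⟨(Finset.mem_sdiff.1 hmq).1, ?_⟩
      intro h
      rcases Finset.mem_insert.1 h with h | h
      · exact hxA (h ▸ (Finset.mem_sdiff.1 hmq).1)
      · exact (Finset.mem_sdiff.1 hmq).2 (Finset.mem_of_mem_erase h)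
  · intro q1 hq1 q2 hq2 heq
    have hq1' := Finset.mem_coe.1 hq1
    have hq2' := Finset.mem_coe.1 hq2
    rw [hD1] at hq1' hq2'
    dsimp only at heq
    rcases Finset.mem_insert.1 hq1' with rfl | hq1'' <;>
      rcases Finset.mem_insert.1 hq2' with rfl | hq2''
    · rfl
    · exfalso
      have hq2x : q2 ≠ q1 := fun h =>
        hxB (h ▸ (Finset.mem_sdiff.1 (Finset.mem_of_mem_erase hq2'')).1)
      rw [if_pos rfl, if_neg hq2x] at heq
      have hm2 := Finset.mem_of_mem_erase hq2''
      by_cases hp'A : p' ∈ SA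
      · rw [hz, if_pos hp'A] at heq
        exact (Finset.mem_sdiff.1 (hmY q2 hm2)).2 (heq ▸ hp')
      · rw [hz, if_neg hp'A] at heq
        have hp'D : p' ∈ SB \ SA := Finset.mem_sdiff.2 ⟨hp', hp'A⟩
        exact (Finset.mem_erase.1 hq2'').1
          (hmI (Finset.mem_coe.2 hm2) (Finset.mem_coe.2 hp'D) heq.symm)
    · exfalso
      have hq1x : q1 ≠ q2 := fun h =>
        hxB (h ▸ (Finset.mem_sdiff.1 (Finset.mem_of_mem_erase hq1'')).1)
      rw [if_pos rfl, if_neg hq1x] at heq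
      have hm1 := Finset.mem_of_mem_erase hq1''
      by_cases hp'A : p' ∈ SA
      · rw [hz, if_pos hp'A] at heq
        exact (Finset.mem_sdiff.1 (hmY q1 hm1)).2 (heq ▸ hp')
      · rw [hz, if_neg hp'A] at heq
        have hp'D : p' ∈ SB \ SA := Finset.mem_sdiff.2 ⟨hp', hp'A⟩
        exact (Finset.mem_erase.1 hq1'').1
          (hmI (Finset.mem_coe.2 hm1) (Finset.mem_coe.2 hp'D) heq)
    · have h1x : q1 ≠ x := fun h =>
        hxB (h ▸ (Finset.mem_sdiff.1 (Finset.mem_of_mem_erase hq1'')).1)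
      have h2x : q2 ≠ x := fun h =>
        hxB (h ▸ (Finset.mem_sdiff.1 (Finset.mem_of_mem_erase hq2'')).1)
      rw [if_neg h1x, if_neg h2x] at heq
      exact hmI (Finset.mem_coe.2 (Finset.mem_of_mem_erase hq1''))
        (Finset.mem_coe.2 (Finset.mem_of_mem_erase hq2'')) heq
  · intro q hq
    have hqx : q ≠ x := fun h =>
      hxB (h ▸ (Finset.mem_sdiff.1 (Finset.mem_of_mem_erase hq)).1)
    dsimp only
    rw [if_neg hqx]

end Step

section Main
variable {n kk : ℕ} {M : Fin n → Fin n → ℝ}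

lemma main_ind (hM : IsStochastic M) {ε : ℝ} (hε : 0 ≤ ε) (hε' : ε < 1/2)
    {A B : Policy n} (hA : IsAddApproxDomPolicy kk M A ε) (hB : IsPolicy kk B) :
    ∀ (T : ℕ) (dist : Fin n → ℝ), (∀ x, 0 ≤ dist x) → ∀ (hist : List (Fin n))
      (SA SB : Finset (Fin n)), SA.card = kk → SB.card = kk →
      ∀ m : Fin n → Fin n, (∀ q ∈ SB \ SA, m q ∈ SA \ SB) →
        Set.InjOn m ↑(SB \ SA) →
      runAux M A T dist hist SA ≤ (2/(1-2*ε)) * runAux M B T dist hist SB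
        + (2/(1-2*ε)) * ∑ q ∈ SB \ SA, ∑ x : Fin n, dist x * rfun M q (m q) x := by
  intro T
  induction T with
  | zero =>
    intro dist hdist hist SA SB hSA hSB m hmY hmI
    have h1 : (0:ℝ) < 1 - 2*ε := by linarith
    have hc : (0:ℝ) ≤ 2/(1-2*ε) := by positivity
    have hpot : (0:ℝ) ≤ ∑ q ∈ SB \ SA, ∑ x : Fin n, dist x * rfun M q (m q) x :=
      Finset.sum_nonneg fun q _ => Finset.sum_nonneg fun x _ =>
        mul_nonneg (hdist x) (rfun_nonneg hM q (m q) x)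
    simp only [runAux]
    nlinarith [mul_nonneg hc hpot]
  | succ T ih =>
    intro dist hdist hist SA SB hSA hSB m hmY hmI
    have h1 : (0:ℝ) < 1 - 2*ε := by linarith
    set c : ℝ := 2/(1-2*ε) with hcdef
    have hc : (0:ℝ) < c := by rw [hcdef]; positivity
    have hkey : 1 + c * (1/2+ε) = c := by rw [hcdef]; field_simp; ring
    have hcards : SA.card = SB.card := by rw [hSA, hSB]
    have hmain : ∀ x : Fin n,
        (if x ∈ SA then runAux M A T (M x) (x :: hist) SA
         else 1 + ∑ p ∈ SA, A (x :: hist) SA p *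
              runAux M A T (M x) (x :: hist) (insert x (SA.erase p)))
        ≤ c * (if x ∈ SB then runAux M B T (M x) (x :: hist) SB
           else 1 + ∑ p ∈ SB, B (x :: hist) SB p *
                runAux M B T (M x) (x :: hist) (insert x (SB.erase p)))
          + c * ∑ q ∈ SB \ SA, rfun M q (m q) x := by
      intro x
      have hMx : ∀ y, 0 ≤ M x y := (hM x).1
      by_cases hxA : x ∈ SA <;> by_cases hxB : x ∈ SB
      · -- both hit
        rw [if_pos hxA, if_pos hxB]
        have h := ih (M x) hMx (x :: hist) SA SB hSA hSB m hmY hmI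
        have hpot : ∑ q ∈ SB \ SA, ∑ y : Fin n, M x y * rfun M q (m q) y
            = ∑ q ∈ SB \ SA, rfun M q (m q) x := by
          refine Finset.sum_congr rfl fun q hq => ?_
          rw [sum_mul_rfun hM]
          have hq' := Finset.mem_sdiff.1 hq
          have hmq := Finset.mem_sdiff.1 (hmY q hq)
          rw [rfun, if_neg (fun h => hmq.2 (by rw [← h]; exact hxB)),
            if_neg (fun h => hq'.2 (by rw [← h]; exact hxA))]
        rw [hpot] at h
        exact h
      · -- A hits, B misses
        rw [if_pos hxA, if_neg hxB]
        obtain ⟨hν0, hνsupp, hν1⟩ := hB (x :: hist) SB hSB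
        obtain ⟨q0, hq0, hq0x, hstep⟩ := stepC hM hxA hxB hcards m hmY hmI
        set S1 : ℝ := ∑ q ∈ (SB \ SA).erase q0, alphaProb M q (m q) x with hS1
        have hbound : ∀ p' ∈ SB, runAux M A T (M x) (x :: hist) SA
            ≤ c * runAux M B T (M x) (x :: hist) (insert x (SB.erase p'))
              + c * (1 + S1) := by
          intro p' hp'
          obtain ⟨m', hY, hI, hsum⟩ := hstep p' hp'
          have hcard' : (insert x (SB.erase p')).card = kk := by
            rw [card_exchange hxB hp', hSB]
          have h := ih (M x) hMx (x :: hist) SA _ hSA hcard' m' hY hI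
          have hpot : ∑ q ∈ (insert x (SB.erase p')) \ SA,
              ∑ y : Fin n, M x y * rfun M q (m' q) y
              = ∑ q ∈ (insert x (SB.erase p')) \ SA, alphaProb M q (m' q) x :=
            Finset.sum_congr rfl fun q _ => sum_mul_rfun hM q (m' q) x
          rw [hpot] at h
          have h2 := mul_le_mul_of_nonneg_left hsum hc.le
          linarith
        have hDpot : ∑ q ∈ SB \ SA, rfun M q (m q) x = S1 := by
          rw [hS1, ← Finset.add_sum_erase _ (fun q => rfun M q (m q) x) hq0]
          have hq0term : rfun M q0 (m q0) x = 0 := by rw [rfun, hq0x, if_pos rfl]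
          rw [hq0term, zero_add]
          refine Finset.sum_congr rfl fun q hq => ?_
          have hq' := Finset.mem_of_mem_erase hq
          have hne1 : ¬ x = m q := by
            intro h
            exact (Finset.mem_erase.1 hq).1
              (hmI (Finset.mem_coe.2 hq') (Finset.mem_coe.2 hq0) (by rw [← h, hq0x]))
          have hne2 : ¬ x = q := fun h =>
            (Finset.mem_sdiff.1 hq').2 (by rw [← h]; exact hxA)
          rw [rfun, if_neg hne1, if_neg hne2]
        set VB : ℝ := ∑ p' ∈ SB, B (x :: hist) SB p' *
            runAux M B T (M x) (x :: hist) (insert x (SB.erase p')) with hVB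
        have hRA : runAux M A T (M x) (x :: hist) SA
            = ∑ p' ∈ SB, B (x :: hist) SB p' * runAux M A T (M x) (x :: hist) SA := by
          rw [← Finset.sum_mul, hν1, one_mul]
        have hle : ∑ p' ∈ SB, B (x :: hist) SB p' * runAux M A T (M x) (x :: hist) SA
            ≤ ∑ p' ∈ SB, B (x :: hist) SB p' *
              (c * runAux M B T (M x) (x :: hist) (insert x (SB.erase p')) + c * (1 + S1)) :=
          Finset.sum_le_sum fun p' hp' =>
            mul_le_mul_of_nonneg_left (hbound p' hp') (hν0 p')
        have hexp : ∑ p' ∈ SB, B (x :: hist) SB p' *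
              (c * runAux M B T (M x) (x :: hist) (insert x (SB.erase p')) + c * (1 + S1))
            = c * VB + c * (1 + S1) := by
          have h1 : ∀ p' ∈ SB, B (x :: hist) SB p' *
                (c * runAux M B T (M x) (x :: hist) (insert x (SB.erase p')) + c * (1 + S1))
              = c * (B (x :: hist) SB p' *
                  runAux M B T (M x) (x :: hist) (insert x (SB.erase p')))
                + B (x :: hist) SB p' * (c * (1 + S1)) := fun _ _ => by ring
          rw [Finset.sum_congr rfl h1, Finset.sum_add_distrib, ← Finset.mul_sum,
            ← Finset.sum_mul, hν1, one_mul, hVB]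
        rw [hDpot, hRA]
        calc ∑ p' ∈ SB, B (x :: hist) SB p' * runAux M A T (M x) (x :: hist) SA
            ≤ c * VB + c * (1 + S1) := hle.trans (le_of_eq hexp)
          _ = c * (1 + VB) + c * S1 := by ring
      · -- A misses, B hits
        rw [if_neg hxA, if_pos hxB]
        obtain ⟨hμ0, hμsupp, hμ1⟩ := hA.1 (x :: hist) SA hSA
        have hxD : x ∈ SB \ SA := Finset.mem_sdiff.2 ⟨hxB, hxA⟩
        have hmx := hmY x hxD
        have hdom := hA.2 x hist SA hSA hxA (m x) (Finset.mem_sdiff.1 hmx).1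
        set S0 : ℝ := ∑ q ∈ (SB \ SA).erase x, alphaProb M q (m q) x with hS0
        set RB : ℝ := runAux M B T (M x) (x :: hist) SB with hRB
        set W : ℝ := ∑ p ∈ SA, A (x :: hist) SA p * alphaProb M p (m x) x with hW
        have hbound : ∀ p ∈ SA, runAux M A T (M x) (x :: hist) (insert x (SA.erase p))
            ≤ c * RB + c * (S0 + alphaProb M p (m x) x) := by
          intro p hp
          obtain ⟨m', hY, hI, hsum⟩ := stepA hM hxB hxA hcards m hmY hmI hp
          have hcard' : (insert x (SA.erase p)).card = kk := by
            rw [card_exchange hxA hp, hSA]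
          have h := ih (M x) hMx (x :: hist) _ SB hcard' hSB m' hY hI
          have hpot : ∑ q ∈ SB \ (insert x (SA.erase p)),
              ∑ y : Fin n, M x y * rfun M q (m' q) y
              = ∑ q ∈ SB \ (insert x (SA.erase p)), alphaProb M q (m' q) x :=
            Finset.sum_congr rfl fun q _ => sum_mul_rfun hM q (m' q) x
          rw [hpot] at h
          have h2 := mul_le_mul_of_nonneg_left hsum hc.le
          linarith
        have hle : ∑ p ∈ SA, A (x :: hist) SA p *
              runAux M A T (M x) (x :: hist) (insert x (SA.erase p))
            ≤ ∑ p ∈ SA, A (x :: hist) SA p *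
              (c * RB + c * (S0 + alphaProb M p (m x) x)) :=
          Finset.sum_le_sum fun p hp =>
            mul_le_mul_of_nonneg_left (hbound p hp) (hμ0 p)
        have hexp : ∑ p ∈ SA, A (x :: hist) SA p *
              (c * RB + c * (S0 + alphaProb M p (m x) x))
            = c * RB + c * S0 + c * W := by
          have h1 : ∀ p ∈ SA, A (x :: hist) SA p *
                (c * RB + c * (S0 + alphaProb M p (m x) x))
              = A (x :: hist) SA p * (c * RB + c * S0)
                + c * (A (x :: hist) SA p * alphaProb M p (m x) x) := fun _ _ => by ring
          rw [Finset.sum_congr rfl h1, Finset.sum_add_distrib, ← Finset.sum_mul, hμ1,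
            one_mul, ← Finset.mul_sum, hW]
        have hdom' : c * W ≤ c * (1/2+ε) := mul_le_mul_of_nonneg_left hdom hc.le
        have hDpot : ∑ q ∈ SB \ SA, rfun M q (m q) x = 1 + S0 := by
          rw [hS0, ← Finset.add_sum_erase _ (fun q => rfun M q (m q) x) hxD]
          have hx1 : rfun M x (m x) x = 1 := by
            rw [rfun, if_neg (fun h => (Finset.mem_sdiff.1 hmx).2 (by rw [← h]; exact hxB)),
              if_pos rfl]
          rw [hx1]
          congr 1
          refine Finset.sum_congr rfl fun q hq => ?_
          have hq' := Finset.mem_of_mem_erase hq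
          have hne1 : ¬ x = m q := fun h =>
            (Finset.mem_sdiff.1 (hmY q hq')).2 (by rw [← h]; exact hxB)
          have hne2 : ¬ x = q := fun h => (Finset.mem_erase.1 hq).1 h.symm
          rw [rfun, if_neg hne1, if_neg hne2]
        rw [hDpot]
        have hfin : c * (1 + S0) = c + c * S0 := by ring
        linarith
      · -- both miss
        rw [if_neg hxA, if_neg hxB]
        obtain ⟨hμ0, hμsupp, hμ1⟩ := hA.1 (x :: hist) SA hSA
        obtain ⟨hν0, hνsupp, hν1⟩ := hB (x :: hist) SB hSB
        set SD : ℝ := ∑ q ∈ SB \ SA, alphaProb M q (m q) x with hSD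
        have hDpot : ∑ q ∈ SB \ SA, rfun M q (m q) x = SD := by
          rw [hSD]
          refine Finset.sum_congr rfl fun q hq => ?_
          have hq' := Finset.mem_sdiff.1 hq
          have hmq := Finset.mem_sdiff.1 (hmY q hq)
          rw [rfun, if_neg (fun h => hxA (by rw [h]; exact hmq.1)),
            if_neg (fun h => hxB (by rw [h]; exact hq'.1))]
        have hbound : ∀ p' ∈ SB, ∃ z ∈ SA, ∀ p ∈ SA,
            runAux M A T (M x) (x :: hist) (insert x (SA.erase p))
            ≤ c * runAux M B T (M x) (x :: hist) (insert x (SB.erase p'))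
              + c * (SD + alphaProb M p z x) := by
          intro p' hp'
          obtain ⟨m1, hm1x, hm1Y, hm1I, hm1eq, hD1⟩ := stepB' hM hxA hxB hcards m hmY hmI hp'
          refine ⟨m1 x, hm1x, ?_⟩
          intro p hp
          have hxB1 : x ∈ insert x (SB.erase p') := Finset.mem_insert_self _ _
          have hcards1 : SA.card = (insert x (SB.erase p')).card := by
            rw [card_exchange hxB hp']; exact hcards
          obtain ⟨m', hY, hI, hsum⟩ := stepA hM hxB1 hxA hcards1 m1 hm1Y hm1I hp
          have hcard'A : (insert x (SA.erase p)).card = kk := by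
            rw [card_exchange hxA hp, hSA]
          have hcard'B : (insert x (SB.erase p')).card = kk := by
            rw [card_exchange hxB hp', hSB]
          have h := ih (M x) hMx (x :: hist) _ _ hcard'A hcard'B m' hY hI
          have hpot : ∑ q ∈ (insert x (SB.erase p')) \ (insert x (SA.erase p)),
              ∑ y : Fin n, M x y * rfun M q (m' q) y
              = ∑ q ∈ (insert x (SB.erase p')) \ (insert x (SA.erase p)),
                alphaProb M q (m' q) x :=
            Finset.sum_congr rfl fun q _ => sum_mul_rfun hM q (m' q) x
          rw [hpot] at h
          have hxnotin : x ∉ (SB \ SA).erase p' := fun hmem =>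
            hxB (Finset.mem_sdiff.1 (Finset.mem_of_mem_erase hmem)).1
          have hmid : ∑ q ∈ ((insert x (SB.erase p')) \ SA).erase x, alphaProb M q (m1 q) x
              = ∑ q ∈ (SB \ SA).erase p', alphaProb M q (m q) x := by
            rw [hD1, Finset.erase_insert hxnotin]
            exact Finset.sum_congr rfl fun q hq => by rw [hm1eq q hq]
          have hmid2 : ∑ q ∈ (SB \ SA).erase p', alphaProb M q (m q) x ≤ SD := by
            rw [hSD]
            exact Finset.sum_le_sum_of_subset_of_nonneg (Finset.erase_subset _ _)
              (fun q _ _ => alphaProb_nonneg hM q (m q) x)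
          rw [hmid] at hsum
          have hsum2 : ∑ q ∈ (insert x (SB.erase p')) \ (insert x (SA.erase p)),
              alphaProb M q (m' q) x ≤ SD + alphaProb M p (m1 x) x := by linarith
          have h2 := mul_le_mul_of_nonneg_left hsum2 hc.le
          linarith
        have houter : ∀ p' ∈ SB,
            ∑ p ∈ SA, A (x :: hist) SA p *
              runAux M A T (M x) (x :: hist) (insert x (SA.erase p))
            ≤ c * runAux M B T (M x) (x :: hist) (insert x (SB.erase p'))
              + c * SD + c * (1/2+ε) := by
          intro p' hp'
          obtain ⟨z, hz, hbd⟩ := hbound p' hp'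
          have hdom := hA.2 x hist SA hSA hxA z hz
          set RB' : ℝ := runAux M B T (M x) (x :: hist) (insert x (SB.erase p')) with hRB'
          have hle : ∑ p ∈ SA, A (x :: hist) SA p *
                runAux M A T (M x) (x :: hist) (insert x (SA.erase p))
              ≤ ∑ p ∈ SA, A (x :: hist) SA p *
                (c * RB' + c * (SD + alphaProb M p z x)) :=
            Finset.sum_le_sum fun p hp =>
              mul_le_mul_of_nonneg_left (hbd p hp) (hμ0 p)
          have hexp : ∑ p ∈ SA, A (x :: hist) SA p *
                (c * RB' + c * (SD + alphaProb M p z x))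
              = c * RB' + c * SD + c * ∑ p ∈ SA, A (x :: hist) SA p * alphaProb M p z x := by
            have h1 : ∀ p ∈ SA, A (x :: hist) SA p *
                  (c * RB' + c * (SD + alphaProb M p z x))
                = A (x :: hist) SA p * (c * RB' + c * SD)
                  + c * (A (x :: hist) SA p * alphaProb M p z x) := fun _ _ => by ring
            rw [Finset.sum_congr rfl h1, Finset.sum_add_distrib, ← Finset.sum_mul, hμ1,
              one_mul, ← Finset.mul_sum]
          have hdom' : c * ∑ p ∈ SA, A (x :: hist) SA p * alphaProb M p z x ≤ c * (1/2+ε) :=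
            mul_le_mul_of_nonneg_left hdom hc.le
          linarith
        set VB : ℝ := ∑ p' ∈ SB, B (x :: hist) SB p' *
            runAux M B T (M x) (x :: hist) (insert x (SB.erase p')) with hVB
        set WA : ℝ := ∑ p ∈ SA, A (x :: hist) SA p *
            runAux M A T (M x) (x :: hist) (insert x (SA.erase p)) with hWA
        have hWAeq : WA = ∑ p' ∈ SB, B (x :: hist) SB p' * WA := by
          rw [← Finset.sum_mul, hν1, one_mul]
        have hle2 : ∑ p' ∈ SB, B (x :: hist) SB p' * WA
            ≤ ∑ p' ∈ SB, B (x :: hist) SB p' *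
              (c * runAux M B T (M x) (x :: hist) (insert x (SB.erase p'))
                + c * SD + c * (1/2+ε)) :=
          Finset.sum_le_sum fun p' hp' =>
            mul_le_mul_of_nonneg_left (houter p' hp') (hν0 p')
        have hexp2 : ∑ p' ∈ SB, B (x :: hist) SB p' *
              (c * runAux M B T (M x) (x :: hist) (insert x (SB.erase p'))
                + c * SD + c * (1/2+ε))
            = c * VB + c * SD + c * (1/2+ε) := by
          have h1 : ∀ p' ∈ SB, B (x :: hist) SB p' *
                (c * runAux M B T (M x) (x :: hist) (insert x (SB.erase p'))
                  + c * SD + c * (1/2+ε))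
              = c * (B (x :: hist) SB p' *
                  runAux M B T (M x) (x :: hist) (insert x (SB.erase p')))
                + B (x :: hist) SB p' * (c * SD + c * (1/2+ε)) := fun _ _ => by ring
          rw [Finset.sum_congr rfl h1, Finset.sum_add_distrib, ← Finset.mul_sum,
            ← Finset.sum_mul, hν1, one_mul, hVB]
          ring
        rw [hDpot]
        have hkey2 : c * (1 + VB) = c + c * VB := by ring
        have hfin : WA ≤ c * VB + c * SD + c * (1/2+ε) := by
          calc WA = ∑ p' ∈ SB, B (x :: hist) SB p' * WA := hWAeq
            _ ≤ _ := hle2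
            _ = c * VB + c * SD + c * (1/2+ε) := hexp2
        linarith
    -- assemble over the distribution of the next request
    rw [runAux, runAux]
    have hle := Finset.sum_le_sum
      (fun x (_ : x ∈ Finset.univ) => mul_le_mul_of_nonneg_left (hmain x) (hdist x))
    refine hle.trans (le_of_eq ?_)
    have hswap : ∑ q ∈ SB \ SA, ∑ x : Fin n, dist x * rfun M q (m q) x
        = ∑ x : Fin n, ∑ q ∈ SB \ SA, dist x * rfun M q (m q) x := Finset.sum_comm
    rw [hswap, Finset.mul_sum, Finset.mul_sum, ← Finset.sum_add_distrib]
    exact Finset.sum_congr rfl fun x _ => by rw [← Finset.mul_sum]; ring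
end Main

/-- **Theorem (robustness, additive error).**  Let `0 ≤ ε < 1/2` and let `A` be an
online paging policy that at every cache miss evicts from a distribution `μ` with
`∑ p, μ p · α(p<q|s) ≤ 1/2 + ε` for every cached `q`.  Then `A` is
`2/(1−2ε)`-competitive: for every online paging policy `B` started from the same
initial cache and every horizon `T`, `E[cost(A, T)] ≤ (2/(1−2ε)) · E[cost(B, T)]`. -/
theorem approx_dominating_additive_competitive {n k : ℕ} (hkn : k < n)
    (M : Fin n → Fin n → ℝ) (hM : IsStochastic M)
    (init : Fin n → ℝ) (hinit : IsDist init)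
    (C₀ : Finset (Fin n)) (hC₀ : C₀.card = k)
    (ε : ℝ) (hε : 0 ≤ ε) (hε' : ε < 1 / 2)
    (A : Policy n) (hA : IsAddApproxDomPolicy k M A ε)
    (B : Policy n) (hB : IsPolicy k B) (T : ℕ) :
    expCost M init A C₀ T ≤ (2 / (1 - 2 * ε)) * expCost M init B C₀ T := by
  have h := main_ind hM hε hε' hA hB T init hinit.1 [] C₀ C₀ hC₀ hC₀ id
    (by intro q hq; rw [Finset.sdiff_self] at hq; exact absurd hq (Finset.notMem_empty q))
    (fun a _ b _ hab => hab)
  rw [Finset.sdiff_self, Finset.sum_empty, mul_zero, add_zero] at h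
  exact h
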